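/- For every inner function u and every f ∈ C(𝕋), the Hankel-type operator H_f^u : K_u → L², H_f^u g = (I − P_u)(f·g), is compact. -/

import Mathlib

noncomputable section

open MeasureTheory Complex Filter Topology Set ContinuousLinearMap
open scoped ENNReal NNReal ComplexConjugate

set_option maxHeartbeats 1000000
set_option synthInstance.maxHeartbeats 1000000

namespace TTOPaper

instance fact2pi : Fact (0 < 2 * Real.pi) := ⟨by positivity⟩

/-- The circle, modelled additively as `ℝ / 2πℤ`. -/
abbrev T2π : Type := AddCircle (2 * Real.pi)

/-- Normalized arc-length (Haar) measure on the circle. -/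
abbrev μ : Measure T2π := AddCircle.haarAddCircle

/-- `L²(𝕋)`. -/
abbrev Ltwo := Lp ℂ 2 μ

/-- The identity function `z ↦ z` on the circle, i.e. `θ ↦ e^{iθ}`. -/
def zfun : T2π → ℂ := fun θ => (AddCircle.toCircle θ : ℂ)

lemma continuous_zfun : Continuous zfun :=
  continuous_subtype_val.comp AddCircle.continuous_toCircle

/-- A continuous function on the (compact) circle is essentially bounded. -/
lemma memLinfty_of_continuous {f : T2π → ℂ} (hf : Continuous f) : MemLp f ⊤ μ :=
  hf.memLp_top_of_hasCompactSupport
    (IsCompact.of_isClosed_subset isCompact_univ (isClosed_tsupport f) (Set.subset_univ _)) μ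

lemma memLinfty_contMap (φ : C(T2π, ℂ)) : MemLp (⇑φ) ⊤ μ :=
  memLinfty_of_continuous φ.continuous

lemma memLinfty_zfun : MemLp zfun ⊤ μ := memLinfty_of_continuous continuous_zfun

/-- Pointwise product of two essentially bounded functions is essentially bounded. -/
lemma memLinfty_mul {φ ψ : T2π → ℂ} (hφ : MemLp φ ⊤ μ) (hψ : MemLp ψ ⊤ μ) :
    MemLp (fun θ => φ θ * ψ θ) ⊤ μ := by
  have h : MemLp (φ • ψ) ⊤ μ := MemLp.smul (r := ⊤) hψ hφ
  exact h.congr_norm (hφ.1.mul hψ.1) (Filter.Eventually.of_forall fun θ => by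
    simp [Pi.smul_apply', smul_eq_mul])

/-- Complex conjugate of an essentially bounded function is essentially bounded. -/
lemma memLinfty_conj {f : T2π → ℂ} (hf : MemLp f ⊤ μ) :
    MemLp (fun θ => (starRingEnd ℂ) (f θ)) ⊤ μ :=
  hf.congr_norm (Complex.continuous_conj.comp_aestronglyMeasurable hf.1)
    (Filter.Eventually.of_forall fun θ => by simp)

/-- Multiplication operator `M_φ : L² → L²` by an essentially bounded symbol `φ`. -/
def mulCLM (φ : T2π → ℂ) (hφ : MemLp φ ⊤ μ) : Ltwo →L[ℂ] Ltwo :=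
  LinearMap.mkContinuous
    { toFun := fun f => MemLp.toLp (φ • (⇑f : T2π → ℂ)) ((Lp.memLp f).smul (r := 2) hφ)
      map_add' := fun f g => by
        have h1 : (φ • (⇑(f + g) : T2π → ℂ)) =ᵐ[μ]
            (φ • (⇑f : T2π → ℂ)) + (φ • (⇑g : T2π → ℂ)) := by
          filter_upwards [Lp.coeFn_add f g] with x hx
          simp only [Pi.smul_apply', Pi.add_apply, hx, smul_add]
        exact (MemLp.toLp_congr _ (((Lp.memLp f).smul (r := 2) hφ).add
          ((Lp.memLp g).smul (r := 2) hφ)) h1).trans (MemLp.toLp_add _ _)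
      map_smul' := fun c f => by
        have h1 : (φ • (⇑(c • f) : T2π → ℂ)) =ᵐ[μ] c • (φ • (⇑f : T2π → ℂ)) := by
          filter_upwards [Lp.coeFn_smul c f] with x hx
          simp only [Pi.smul_apply', hx, Pi.smul_apply, smul_comm c]
        show MemLp.toLp (φ • (⇑(c • f) : T2π → ℂ)) ((Lp.memLp (c • f)).smul (r := 2) hφ)
            = c • MemLp.toLp (φ • (⇑f : T2π → ℂ)) ((Lp.memLp f).smul (r := 2) hφ)
        rw [MemLp.toLp_congr ((Lp.memLp (c • f)).smul (r := 2) hφ)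
          (((Lp.memLp f).smul (r := 2) hφ).const_smul c) h1, MemLp.toLp_const_smul] }
    (eLpNorm φ ⊤ μ).toReal
    (fun f => by
      simp only [LinearMap.coe_mk, AddHom.coe_mk]
      rw [Lp.norm_toLp, Lp.norm_def, ← ENNReal.toReal_mul]
      exact ENNReal.toReal_mono (ENNReal.mul_ne_top hφ.eLpNorm_ne_top (Lp.eLpNorm_ne_top f))
        (eLpNorm_smul_le_eLpNorm_top_mul_eLpNorm 2 (Lp.aestronglyMeasurable f) φ))

/-- The Hardy space `H²`, as the subspace of `L²` of functions whose Fourier coefficients of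
negative index all vanish. -/
def H2 : Submodule ℂ Ltwo where
  carrier := {f : Ltwo | ∀ n : ℤ, n < 0 → fourierCoeff (⇑f) n = 0}
  add_mem' := by
    intro f g hf hg n hn
    have hf' := hf n hn
    have hg' := hg n hn
    rw [← fourierBasis_repr] at hf' hg' ⊢
    rw [map_add, lp.coeFn_add, Pi.add_apply, hf', hg', add_zero]
  zero_mem' := by
    intro n hn
    rw [← fourierBasis_repr, map_zero]
    simp
  smul_mem' := by
    intro c f hf n hn
    have hf' := hf n hn
    rw [← fourierBasis_repr] at hf' ⊢
    rw [_root_.map_smul, lp.coeFn_smul, Pi.smul_apply, hf', smul_zero]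

lemma isClosed_H2 : IsClosed (H2 : Set Ltwo) := by
  have h : (H2 : Set Ltwo) =
      ⋂ (n : ℤ) (_ : n < 0), {f : Ltwo | (fourierBasis.repr f : ℤ → ℂ) n = 0} := by
    ext f
    simp only [Set.mem_iInter, Set.mem_setOf_eq]
    constructor
    · intro hf n hn; rw [fourierBasis_repr]; exact hf n hn
    · intro hf n hn; rw [← fourierBasis_repr]; exact hf n hn
  rw [h]
  refine isClosed_iInter fun n => isClosed_iInter fun _ => ?_
  have h1 : Continuous fun x : lp (fun _ : ℤ => ℂ) 2 => (x : ℤ → ℂ) n :=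
    (continuous_apply n).comp lp.uniformContinuous_coe.continuous
  exact isClosed_eq (h1.comp fourierBasis.repr.continuous) continuous_const
/-- An inner function: a nonconstant bounded function in `H²` which is unimodular a.e. -/
structure IsInner (u : T2π → ℂ) : Prop where
  meas : AEStronglyMeasurable u μ
  unimodular : ∀ᵐ θ ∂μ, ‖u θ‖ = 1
  negCoeff : ∀ n : ℤ, n < 0 → fourierCoeff u n = 0
  nonconst : ¬ ∃ c : ℂ, u =ᵐ[μ] fun _ => c

lemma IsInner.memLinfty {u : T2π → ℂ} (hu : IsInner u) : MemLp u ⊤ μ :=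
  memLp_top_of_bound hu.meas 1 (hu.unimodular.mono fun θ h => by
    rw [h])

/-- The holomorphic extension of a function on the circle to the open unit disk, via the
power series whose coefficients are the Fourier coefficients of nonnegative index. -/
def extD (u : T2π → ℂ) (z : ℂ) : ℂ := ∑' n : ℕ, fourierCoeff u (n : ℤ) * z ^ n

/-- The spectrum `σ(u)` of an inner function `u`: the set of `λ` in the closed unit disk where
`liminf_{z → λ, z ∈ 𝔻} |u(z)| = 0`. -/
def specU (u : T2π → ℂ) : Set ℂ :=
  {l | l ∈ Metric.closedBall (0 : ℂ) 1 ∧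
    Filter.liminf (fun z => ‖extD u z‖) (nhdsWithin l (Metric.ball (0 : ℂ) 1)) = 0}

/-- `σ(u) ∩ 𝕋`, viewed as a subset of the additive circle. -/
def specT (u : T2π → ℂ) : Set T2π := {θ : T2π | zfun θ ∈ specU u}

/-- The model space `K_u = H² ⊖ uH²`. -/
def KuSub (u : T2π → ℂ) (hu : IsInner u) : Submodule ℂ Ltwo :=
  H2 ⊓ (Submodule.map (mulCLM u hu.memLinfty).toLinearMap H2)ᗮ

lemma isClosed_KuSub (u : T2π → ℂ) (hu : IsInner u) : IsClosed ((KuSub u hu : Set Ltwo)) := by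
  have h : (KuSub u hu : Set Ltwo) = (H2 : Set Ltwo) ∩
      ((Submodule.map (mulCLM u hu.memLinfty).toLinearMap H2)ᗮ : Set Ltwo) := rfl
  rw [h]
  exact isClosed_H2.inter (Submodule.isClosed_orthogonal _)

instance (u : T2π → ℂ) (hu : IsInner u) : CompleteSpace (KuSub u hu) :=
  (isClosed_KuSub u hu).completeSpace_coe

attribute [irreducible] H2 KuSub mulCLM

instance KuNormedAddCommGroup (u : T2π → ℂ) (hu : IsInner u) :
    NormedAddCommGroup (KuSub u hu) := Submodule.normedAddCommGroup _

instance KuInnerProductSpace (u : T2π → ℂ) (hu : IsInner u) :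
    InnerProductSpace ℂ (KuSub u hu) := Submodule.innerProductSpace _

instance KuNormedSpace (u : T2π → ℂ) (hu : IsInner u) :
    NormedSpace ℂ (KuSub u hu) := by infer_instance

instance KuContinuousStar (u : T2π → ℂ) (hu : IsInner u) :
    ContinuousStar (KuSub u hu →L[ℂ] KuSub u hu) :=
  ⟨(ContinuousLinearMap.adjoint (𝕜 := ℂ) (E := KuSub u hu) (F := KuSub u hu)).continuous⟩

/-- The truncated Toeplitz operator `A_φ^u = P_u M_φ |_{K_u}` on the model space `K_u`. -/
def TTOp (u : T2π → ℂ) (hu : IsInner u) (φ : T2π → ℂ) (hφ : MemLp φ ⊤ μ) :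
    KuSub u hu →L[ℂ] KuSub u hu :=
  ((KuSub u hu).orthogonalProjectionOnto) ∘L (mulCLM φ hφ) ∘L (KuSub u hu).subtypeL

/-- The compressed shift `A_z^u`. -/
def Az (u : T2π → ℂ) (hu : IsInner u) : KuSub u hu →L[ℂ] KuSub u hu :=
  TTOp u hu zfun memLinfty_zfun

/-- The unital C*-algebra generated by the compressed shift. -/
def CstarAz (u : T2π → ℂ) (hu : IsInner u) :
    StarSubalgebra ℂ (KuSub u hu →L[ℂ] KuSub u hu) :=
  StarAlgebra.elemental ℂ (Az u hu)

/-- The commutator ideal of a C*-algebra of operators, i.e. the smallest closed two-sided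
ideal containing all commutators: the closure of the two-sided ideal generated by the
commutators.  Realized here as a subset of the ambient algebra of bounded operators. -/
def commutatorIdealSet {u : T2π → ℂ} {hu : IsInner u}
    (S : StarSubalgebra ℂ (KuSub u hu →L[ℂ] KuSub u hu)) :
    Set (KuSub u hu →L[ℂ] KuSub u hu) :=
  Subtype.val '' (closure
    ((TwoSidedIdeal.span {x : S | ∃ a b : S, x = a * b - b * a} : TwoSidedIdeal S) : Set S))

/-- The essential spectrum of an operator on `K_u`: the spectrum of its image in the Calkin
algebra, i.e. the set of `z` such that `z - T` is not invertible modulo the compacts. -/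
def essSpectrum {u : T2π → ℂ} {hu : IsInner u} (T : KuSub u hu →L[ℂ] KuSub u hu) : Set ℂ :=
  {z : ℂ | ¬ ∃ S : KuSub u hu →L[ℂ] KuSub u hu,
    IsCompactOperator (⇑(S * (z • (1 : KuSub u hu →L[ℂ] KuSub u hu) - T) - 1)) ∧
    IsCompactOperator (⇑((z • (1 : KuSub u hu →L[ℂ] KuSub u hu) - T) * S - 1))}

/-- The essential norm of an operator on `K_u`: the norm of its image in the Calkin algebra,
i.e. the distance to the ideal of compact operators. -/
def essNorm {u : T2π → ℂ} {hu : IsInner u} (T : KuSub u hu →L[ℂ] KuSub u hu) : ℝ :=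
  sInf {c : ℝ | ∃ K : KuSub u hu →L[ℂ] KuSub u hu, IsCompactOperator (⇑K) ∧ c = ‖T - K‖}


/-! ### Piecewise continuous symbols -/

/-- `φ` has one-sided limits `Lp` (from above) and `Lm` (from below) at the point `ζ` of the
circle, computed in terms of any lift of `ζ` to `ℝ`. -/
def HasOneSidedLimits (φ : T2π → ℂ) (ζ : T2π) (Lp Lm : ℂ) : Prop :=
  ∀ x : ℝ, (x : T2π) = ζ →
    Filter.Tendsto (fun t : ℝ => φ (t : T2π)) (nhdsWithin x (Set.Ioi x)) (nhds Lp) ∧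
    Filter.Tendsto (fun t : ℝ => φ (t : T2π)) (nhdsWithin x (Set.Iio x)) (nhds Lm)

/-- A piecewise continuous function on the circle: continuous off a finite set, with one-sided
limits at each of the exceptional points. -/
def PiecewiseContinuous (φ : T2π → ℂ) : Prop :=
  ∃ F : Finset T2π, ContinuousOn φ ((↑F : Set T2π)ᶜ) ∧
    ∀ ζ ∈ F, ∃ Lp Lm : ℂ, HasOneSidedLimits φ ζ Lp Lm

/-- The function `χ(e^{iθ}) = 1 - θ/(2π)`, `0 ≤ θ < 2π`. -/
def chiFun : T2π → ℂ :=
  fun ζ => 1 - ((((AddCircle.measurableEquivIco (T := 2 * Real.pi) 0 ζ : ℝ) / (2 * Real.pi)) : ℝ) : ℂ)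

lemma memLinfty_chiFun : MemLp chiFun ⊤ μ := by
  have hmeas : Measurable chiFun := by
    have h1 : Measurable fun ζ : T2π => (AddCircle.measurableEquivIco (T := 2 * Real.pi) 0 ζ : ℝ) :=
      measurable_subtype_coe.comp (AddCircle.measurableEquivIco (T := 2 * Real.pi) 0).measurable
    exact (Complex.measurable_ofReal.comp (h1.div_const _)).const_sub 1
  refine memLp_top_of_bound hmeas.aestronglyMeasurable 1 (Filter.Eventually.of_forall fun ζ => ?_)
  set r : ℝ := (AddCircle.measurableEquivIco (T := 2 * Real.pi) 0 ζ : ℝ) with hr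
  have hmem : r ∈ Set.Ico (0 : ℝ) (0 + 2 * Real.pi) :=
    (AddCircle.measurableEquivIco (T := 2 * Real.pi) 0 ζ).2
  have h2π : (0 : ℝ) < 2 * Real.pi := fact2pi.out
  have h0 : 0 ≤ r / (2 * Real.pi) := div_nonneg hmem.1 h2π.le
  have h1' : r / (2 * Real.pi) < 1 := by
    rw [div_lt_one h2π]
    simpa using hmem.2
  have : chiFun ζ = (((1 : ℝ) - r / (2 * Real.pi) : ℝ) : ℂ) := by
    simp [chiFun, hr]
  rw [this, Complex.norm_real, Real.norm_eq_abs, abs_le]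
  constructor <;> nlinarith

/-! ### Ingredients for Clark's unitary perturbations -/

/-- The value `u(0)` of the holomorphic extension of `u` at the origin. -/
def u0 (u : T2π → ℂ) : ℂ := extD u 0

/-- The reproducing kernel `k₀ = 1 - conj(u(0))·u` at the origin, as a function. -/
def k0fun (u : T2π → ℂ) : T2π → ℂ := fun θ => 1 - (starRingEnd ℂ) (u0 u) * u θ

lemma memLinfty_k0fun {u : T2π → ℂ} (hu : IsInner u) : MemLp (k0fun u) ⊤ μ := by
  have hmeas : AEStronglyMeasurable (k0fun u) μ :=
    aestronglyMeasurable_const.sub (hu.meas.const_mul _)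
  refine memLp_top_of_bound hmeas (1 + ‖u0 u‖) ?_
  filter_upwards [hu.unimodular] with θ hθ
  calc ‖1 - (starRingEnd ℂ) (u0 u) * u θ‖
      ≤ ‖(1 : ℂ)‖ + ‖(starRingEnd ℂ) (u0 u) * u θ‖ := norm_sub_le _ _
    _ ≤ 1 + ‖u0 u‖ := by
        rw [norm_mul]
        simp only [norm_one]
        rw [Complex.norm_conj, hθ, mul_one]

/-- `Cf(ζ) = u(ζ) ζ̄ conj(f(ζ))`, applied to `k₀`, as a function. -/
def Ck0fun (u : T2π → ℂ) : T2π → ℂ :=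
  fun θ => u θ * (starRingEnd ℂ) (zfun θ) * (starRingEnd ℂ) (k0fun u θ)

lemma memLinfty_Ck0fun {u : T2π → ℂ} (hu : IsInner u) : MemLp (Ck0fun u) ⊤ μ :=
  memLinfty_mul (memLinfty_mul hu.memLinfty (memLinfty_conj memLinfty_zfun))
    (memLinfty_conj (memLinfty_k0fun hu))

/-- `k₀` as an element of the model space (it indeed lies in `K_u`, so that projecting the
corresponding `L²`-function onto `K_u` does not change it). -/
def k0 (u : T2π → ℂ) (hu : IsInner u) : KuSub u hu :=
  (KuSub u hu).orthogonalProjectionOnto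
    (MemLp.toLp (k0fun u) ((memLinfty_k0fun hu).mono_exponent le_top))

/-- `Ck₀` as an element of the model space. -/
def Ck0 (u : T2π → ℂ) (hu : IsInner u) : KuSub u hu :=
  (KuSub u hu).orthogonalProjectionOnto
    (MemLp.toLp (Ck0fun u) ((memLinfty_Ck0fun hu).mono_exponent le_top))

/-- The rank-one operator `k₀ ⊗ Ck₀ : f ↦ ⟨f, Ck₀⟩ k₀` (the inner product being that of `L²`,
conjugate-linear in `Ck₀`). -/
def rankOneClark (u : T2π → ℂ) (hu : IsInner u) : KuSub u hu →L[ℂ] KuSub u hu :=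
  (innerSL ℂ (Ck0 u hu)).smulRight (k0 u hu)

/-- The Clark perturbation `U_α = A_z^u + (α/(1 - conj(u(0))α)) k₀ ⊗ Ck₀`. -/
def clarkU (u : T2π → ℂ) (hu : IsInner u) (α : ℂ) : KuSub u hu →L[ℂ] KuSub u hu :=
  Az u hu + (α / (1 - (starRingEnd ℂ) (u0 u) * α)) • rankOneClark u hu

/-! ### Complex symmetric operators -/

/-- A conjugation: a conjugate-linear isometric involution. -/
structure IsConjugation {E : Type*} [NormedAddCommGroup E] [InnerProductSpace ℂ E]
    (J : E → E) : Prop where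
  map_add : ∀ x y, J (x + y) = J x + J y
  map_smul : ∀ (c : ℂ) (x), J (c • x) = (starRingEnd ℂ) c • J x
  involutive : ∀ x, J (J x) = x
  inner_map : ∀ x y, (inner ℂ (J x) (J y) : ℂ) = (inner ℂ y x : ℂ)

/-- The block operator matrix `[[0, A], [0, 0]]` on `H ⊕ H` (with the `ℓ²` direct sum norm). -/
def blockOp {H : Type*} [NormedAddCommGroup H] [InnerProductSpace ℂ H] (A : H →L[ℂ] H) :
    WithLp 2 (H × H) →L[ℂ] WithLp 2 (H × H) :=
  (((WithLp.prodContinuousLinearEquiv 2 ℂ H H).symm : (H × H) →L[ℂ] WithLp 2 (H × H)) ∘L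
    ((A.comp (ContinuousLinearMap.snd ℂ H H)).prod 0)) ∘L
    ((WithLp.prodContinuousLinearEquiv 2 ℂ H H) : WithLp 2 (H × H) →L[ℂ] (H × H))


/-! ### The unilateral shift and direct sums -/

/-- `ℓ²(ℕ)`. -/
abbrev ellTwo := lp (fun _ : ℕ => ℂ) 2

/-- The underlying function of the unilateral shift: `(x₀, x₁, …) ↦ (0, x₀, x₁, …)`. -/
def shiftFun (x : ℕ → ℂ) : ℕ → ℂ := fun n => if n = 0 then 0 else x (n - 1)

lemma memℓp_shiftFun (x : ellTwo) : Memℓp (shiftFun (⇑x)) 2 := by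
  apply memℓp_gen
  have hs : Summable fun n : ℕ => ‖x n‖ ^ (2 : ℝ≥0∞).toReal :=
    (lp.memℓp x).summable (by norm_num)
  refine (summable_nat_add_iff 1).mp ?_
  have h : (fun n : ℕ => ‖shiftFun (⇑x) (n + 1)‖ ^ (2 : ℝ≥0∞).toReal)
      = fun n : ℕ => ‖x n‖ ^ (2 : ℝ≥0∞).toReal := by
    funext n; simp [shiftFun]
  rw [h]; exact hs

lemma tsum_shiftFun (x : ellTwo) :
    ∑' n : ℕ, ‖(⟨shiftFun (⇑x), memℓp_shiftFun x⟩ : ellTwo) n‖ ^ (2 : ℝ≥0∞).toReal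
      = ∑' n : ℕ, ‖x n‖ ^ (2 : ℝ≥0∞).toReal := by
  show ∑' n : ℕ, ‖shiftFun (⇑x) n‖ ^ (2 : ℝ≥0∞).toReal = _
  rw [Summable.tsum_eq_zero_add ((memℓp_shiftFun x).summable (by norm_num))]
  have h0 : ‖shiftFun (⇑x) 0‖ ^ (2 : ℝ≥0∞).toReal = 0 := by
    simp [shiftFun, Real.zero_rpow (by norm_num : (2 : ℝ≥0∞).toReal ≠ 0)]
  have h : (fun n : ℕ => ‖shiftFun (⇑x) (n + 1)‖ ^ (2 : ℝ≥0∞).toReal)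
      = fun n : ℕ => ‖x n‖ ^ (2 : ℝ≥0∞).toReal := by
    funext n; simp [shiftFun]
  rw [h0, h, zero_add]

/-- The unilateral shift `S` on `ℓ²(ℕ)`. -/
def shiftS : ellTwo →L[ℂ] ellTwo :=
  LinearMap.mkContinuous
    { toFun := fun x => (⟨shiftFun (⇑x), memℓp_shiftFun x⟩ : ellTwo)
      map_add' := fun x y => by
        apply Subtype.ext
        funext n
        have h1 : (x + y : ellTwo) n = x n + y n := by rw [lp.coeFn_add]; rfl
        show shiftFun (⇑(x + y)) n = shiftFun (⇑x) n + shiftFun (⇑y) n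
        by_cases h : n = 0 <;> simp [shiftFun, h, h1]
      map_smul' := fun c x => by
        apply Subtype.ext
        funext n
        have h1 : (c • x : ellTwo) n = c • x n := by rw [lp.coeFn_smul]; rfl
        show shiftFun (⇑(c • x)) n = c • shiftFun (⇑x) n
        by_cases h : n = 0 <;> simp [shiftFun, h, h1] }
    1
    (fun x => by
      have h2 : (0 : ℝ) < (2 : ℝ≥0∞).toReal := by norm_num
      show ‖(⟨shiftFun (⇑x), memℓp_shiftFun x⟩ : ellTwo)‖ ≤ 1 * ‖x‖
      rw [one_mul, lp.norm_eq_tsum_rpow h2, lp.norm_eq_tsum_rpow h2, tsum_shiftFun x])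

/-- The diagonal (componentwise) operator `⊕ᵢ Vᵢ` on an `ℓ²`-direct sum, given a uniform
bound on the `Vᵢ`. -/
def lpDiag {E : ℕ → Type*} [∀ i, NormedAddCommGroup (E i)] [∀ i, NormedSpace ℂ (E i)]
    (V : ∀ i, E i →L[ℂ] E i) (C : ℝ) (hC : 0 ≤ C) (hV : ∀ i (y : E i), ‖V i y‖ ≤ C * ‖y‖) :
    lp E 2 →L[ℂ] lp E 2 :=
  have h2 : (0 : ℝ) < (2 : ℝ≥0∞).toReal := by norm_num
  have key : ∀ x : lp E 2, Summable fun i => ‖V i (x i)‖ ^ (2 : ℝ≥0∞).toReal := by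
    intro x
    refine Summable.of_nonneg_of_le (fun i => Real.rpow_nonneg (norm_nonneg _) _)
      (fun i => ?_) (((lp.memℓp x).summable h2).mul_left (C ^ (2 : ℝ≥0∞).toReal))
    calc ‖V i (x i)‖ ^ (2 : ℝ≥0∞).toReal
        ≤ (C * ‖x i‖) ^ (2 : ℝ≥0∞).toReal :=
          Real.rpow_le_rpow (norm_nonneg _) (hV i (x i)) h2.le
      _ = C ^ (2 : ℝ≥0∞).toReal * ‖x i‖ ^ (2 : ℝ≥0∞).toReal :=
          Real.mul_rpow hC (norm_nonneg _)
  LinearMap.mkContinuous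
    { toFun := fun x => (⟨fun i => V i (x i), memℓp_gen (key x)⟩ : lp E 2)
      map_add' := fun x y => by
        apply Subtype.ext
        funext i
        have h1 : (x + y : lp E 2) i = x i + y i := by rw [lp.coeFn_add]; rfl
        show V i ((x + y : lp E 2) i) = V i (x i) + V i (y i)
        rw [h1, map_add]
      map_smul' := fun c x => by
        apply Subtype.ext
        funext i
        have h1 : (c • x : lp E 2) i = c • x i := by rw [lp.coeFn_smul]; rfl
        show V i ((c • x : lp E 2) i) = c • V i (x i)
        rw [h1, _root_.map_smul] }
    C
    (fun x => by
      show ‖(⟨fun i => V i (x i), memℓp_gen (key x)⟩ : lp E 2)‖ ≤ C * ‖x‖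
      rw [lp.norm_eq_tsum_rpow h2, lp.norm_eq_tsum_rpow h2]
      have hsum := (lp.memℓp x).summable h2
      have hineq : ∑' i, ‖(⟨fun i => V i (x i), memℓp_gen (key x)⟩ : lp E 2) i‖
            ^ (2 : ℝ≥0∞).toReal
          ≤ C ^ (2 : ℝ≥0∞).toReal * ∑' i, ‖x i‖ ^ (2 : ℝ≥0∞).toReal := by
        rw [← tsum_mul_left]
        refine Summable.tsum_le_tsum (fun i => ?_) (key x) (hsum.mul_left _)
        calc ‖V i (x i)‖ ^ (2 : ℝ≥0∞).toReal
            ≤ (C * ‖x i‖) ^ (2 : ℝ≥0∞).toReal :=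
              Real.rpow_le_rpow (norm_nonneg _) (hV i (x i)) h2.le
          _ = C ^ (2 : ℝ≥0∞).toReal * ‖x i‖ ^ (2 : ℝ≥0∞).toReal :=
              Real.mul_rpow hC (norm_nonneg _)
      calc (∑' i, ‖(⟨fun i => V i (x i), memℓp_gen (key x)⟩ : lp E 2) i‖
            ^ (2 : ℝ≥0∞).toReal) ^ (1 / (2 : ℝ≥0∞).toReal)
          ≤ (C ^ (2 : ℝ≥0∞).toReal * ∑' i, ‖x i‖ ^ (2 : ℝ≥0∞).toReal)
              ^ (1 / (2 : ℝ≥0∞).toReal) := by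
            refine Real.rpow_le_rpow ?_ hineq (by positivity)
            exact tsum_nonneg fun i => Real.rpow_nonneg (norm_nonneg _) _
        _ = C * (∑' i, ‖x i‖ ^ (2 : ℝ≥0∞).toReal) ^ (1 / (2 : ℝ≥0∞).toReal) := by
            rw [Real.mul_rpow (Real.rpow_nonneg hC _)
              (tsum_nonneg fun i => Real.rpow_nonneg (norm_nonneg _) _)]
            rw [← Real.rpow_mul hC, mul_one_div_cancel (ne_of_gt h2), Real.rpow_one])


/-- The Hankel-type operator `H_f^u : K_u → L²`, `g ↦ (I - P_u)(f·g)`. -/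
def hankel (u : T2π → ℂ) (hu : IsInner u) (f : T2π → ℂ) (hf : MemLp f ⊤ μ) :
    KuSub u hu →L[ℂ] Ltwo :=
  ((ContinuousLinearMap.id ℂ Ltwo - (KuSub u hu).subtypeL ∘L (KuSub u hu).orthogonalProjectionOnto) ∘L
    mulCLM f hf) ∘L (KuSub u hu).subtypeL

/-- `S ⊕ S*` on `ℓ² ⊕ ℓ²`. -/
def sOplusSstar : WithLp 2 (ellTwo × ellTwo) →L[ℂ] WithLp 2 (ellTwo × ellTwo) :=
  (((WithLp.prodContinuousLinearEquiv 2 ℂ ellTwo ellTwo).symm :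
      (ellTwo × ellTwo) →L[ℂ] WithLp 2 (ellTwo × ellTwo)) ∘L
    (shiftS.prodMap (ContinuousLinearMap.adjoint shiftS))) ∘L
    ((WithLp.prodContinuousLinearEquiv 2 ℂ ellTwo ellTwo) :
      WithLp 2 (ellTwo × ellTwo) →L[ℂ] (ellTwo × ellTwo))

/-- `⊕_{i=1}^∞ (S ⊕ S*)` on the `ℓ²`-direct sum of countably many copies of `ℓ² ⊕ ℓ²`. -/
def bigDirectSum :
    lp (fun _ : ℕ => WithLp 2 (ellTwo × ellTwo)) 2 →L[ℂ]
      lp (fun _ : ℕ => WithLp 2 (ellTwo × ellTwo)) 2 :=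
  lpDiag (fun _ => sOplusSstar) ‖sOplusSstar‖ (norm_nonneg _)
    (fun _ y => ContinuousLinearMap.le_opNorm _ y)

/-!
The symbols `f ∈ C(𝕋)` for which `H_f^u` is compact form a closed subspace, because
`f ↦ H_f^u` is bounded and the compact operators are closed. This subspace is closed under
products: inserting `1 = P_u + (1 - P_u)` between `M_f` and `M_g` gives
`H_{fg}^u = H_f^u A_g^u + (1 - P_u) M_f H_g^u`. It contains `z` and `z̄`, whose Hankel operators
have rank one since `z K_u ⊆ K_u ⊕ ℂ u` and `z̄ K_u ⊆ K_u ⊕ ℂ z̄`. Hence it contains every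
trigonometric polynomial, and these are dense in `C(𝕋)`.
-/

end TTOPaper

section OrthogonalComplement

variable {𝕜 E F : Type*} [RCLike 𝕜] [NormedAddCommGroup E] [InnerProductSpace 𝕜 E]
  [NormedAddCommGroup F] [NormedSpace 𝕜 F]

lemma Submodule.sub_starProjection_eq_of_sub_mem (K : Submodule 𝕜 E) [K.HasOrthogonalProjection]
    {x w : E} (hw : w ∈ Kᗮ) (hxw : x - w ∈ K) : x - K.starProjection x = w := by
  rw [K.eq_starProjection_of_mem_orthogonal hxw (by rwa [sub_sub_cancel]), sub_sub_cancel]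

lemma Submodule.isCompactOperator_sub_starProjection_comp (K : Submodule 𝕜 E)
    [K.HasOrthogonalProjection] (T : F →L[𝕜] E) {v : E} (hv : v ∈ Kᗮ)
    (hT : ∀ x, T x - inner 𝕜 v (T x) • v ∈ K) :
    IsCompactOperator ((ContinuousLinearMap.id 𝕜 E - K.starProjection) ∘L T) := by
  have hrank : (ContinuousLinearMap.id 𝕜 E - K.starProjection) ∘L T =
      toSpanSingleton 𝕜 v ∘L (innerSL 𝕜 v ∘L T) := by
    ext x
    simpa using K.sub_starProjection_eq_of_sub_mem (Kᗮ.smul_mem _ hv) (hT x)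
  rw [hrank]
  exact (isCompactOperator_of_locallyCompactSpace_dom (innerSL 𝕜 v ∘L T)).clm_comp
    (toSpanSingleton 𝕜 v)

end OrthogonalComplement

namespace TTOPaper

lemma mulCLM_coeFn (φ : T2π → ℂ) (hφ : MemLp φ ⊤ μ) (x : Ltwo) :
    mulCLM φ hφ x =ᵐ[μ] fun θ => φ θ * x θ := by
  simp only [mulCLM, LinearMap.mkContinuous_apply, LinearMap.coe_mk, AddHom.coe_mk]
  filter_upwards [MemLp.coeFn_toLp ((Lp.memLp x).smul (r := 2) hφ)] with θ hθ
  simpa using hθ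

lemma norm_mulCLM_le (φ : T2π → ℂ) (hφ : MemLp φ ⊤ μ) :
    ‖mulCLM φ hφ‖ ≤ (eLpNorm φ ⊤ μ).toReal := by
  unfold mulCLM
  exact LinearMap.mkContinuous_norm_le _ ENNReal.toReal_nonneg _

lemma mulCLM_mul {φ ψ : T2π → ℂ} (hφ : MemLp φ ⊤ μ) (hψ : MemLp ψ ⊤ μ) :
    mulCLM (fun θ => φ θ * ψ θ) (memLinfty_mul hφ hψ) = mulCLM φ hφ ∘L mulCLM ψ hψ := by
  refine ContinuousLinearMap.ext fun x => Lp.ext ?_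
  filter_upwards [mulCLM_coeFn _ (memLinfty_mul hφ hψ) x, mulCLM_coeFn φ hφ (mulCLM ψ hψ x),
    mulCLM_coeFn ψ hψ x] with θ h₁ h₂ h₃
  rw [comp_apply, h₁, h₂, h₃, mul_assoc]

lemma mulCLM_comm {φ ψ : T2π → ℂ} (hφ : MemLp φ ⊤ μ) (hψ : MemLp ψ ⊤ μ) (x : Ltwo) :
    mulCLM φ hφ (mulCLM ψ hψ x) = mulCLM ψ hψ (mulCLM φ hφ x) := by
  simp only [← comp_apply, ← mulCLM_mul, mul_comm]

lemma mulCLM_add {φ ψ : T2π → ℂ} (hφ : MemLp φ ⊤ μ) (hψ : MemLp ψ ⊤ μ) :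
    mulCLM (φ + ψ) (hφ.add hψ) = mulCLM φ hφ + mulCLM ψ hψ := by
  refine ContinuousLinearMap.ext fun x => Lp.ext ?_
  filter_upwards [mulCLM_coeFn _ (hφ.add hψ) x, mulCLM_coeFn φ hφ x, mulCLM_coeFn ψ hψ x,
    Lp.coeFn_add (mulCLM φ hφ x) (mulCLM ψ hψ x)] with θ h₁ h₂ h₃ h₄
  rw [add_apply, h₁, h₄, Pi.add_apply, Pi.add_apply, h₂, h₃, add_mul]

lemma mulCLM_const_smul (c : ℂ) {φ : T2π → ℂ} (hφ : MemLp φ ⊤ μ) :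
    mulCLM (c • φ) (hφ.const_smul c) = c • mulCLM φ hφ := by
  refine ContinuousLinearMap.ext fun x => Lp.ext ?_
  filter_upwards [mulCLM_coeFn _ (hφ.const_smul c) x, mulCLM_coeFn φ hφ x,
    Lp.coeFn_smul c (mulCLM φ hφ x)] with θ h₁ h₂ h₃
  rw [smul_apply, h₁, h₃, Pi.smul_apply, Pi.smul_apply, h₂, smul_eq_mul, smul_eq_mul, mul_assoc]

lemma norm_mulCLM_continuousMap_le (f : C(T2π, ℂ)) : ‖mulCLM f (memLinfty_contMap f)‖ ≤ ‖f‖ := by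
  refine (norm_mulCLM_le _ _).trans (ENNReal.toReal_le_of_le_ofReal (norm_nonneg f) ?_)
  rw [eLpNorm_exponent_top]
  exact eLpNormEssSup_le_of_ae_bound (Eventually.of_forall f.norm_coe_le_norm)

def mulContCLM : C(T2π, ℂ) →L[ℂ] (Ltwo →L[ℂ] Ltwo) :=
  LinearMap.mkContinuous
    { toFun := fun f => mulCLM f (memLinfty_contMap f)
      map_add' := fun f g => mulCLM_add (memLinfty_contMap f) (memLinfty_contMap g)
      map_smul' := fun c f => mulCLM_const_smul c (memLinfty_contMap f) }
    1 (fun f => by simpa using norm_mulCLM_continuousMap_le f)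

lemma inner_mulCLM_mulCLM {φ : T2π → ℂ} (hφ : MemLp φ ⊤ μ) (hmod : ∀ᵐ θ ∂μ, ‖φ θ‖ = 1)
    (x y : Ltwo) : inner ℂ (mulCLM φ hφ x) (mulCLM φ hφ y) = inner ℂ x y := by
  simp only [L2.inner_def, RCLike.inner_apply']
  refine integral_congr_ae ?_
  filter_upwards [mulCLM_coeFn φ hφ x, mulCLM_coeFn φ hφ y, hmod] with θ hx hy hθ
  have hconj : conj (φ θ) * φ θ = 1 := by
    rw [← Complex.normSq_eq_conj_mul_self, Complex.normSq_eq_norm_sq, hθ]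
    norm_num
  rw [hx, hy, map_mul]
  linear_combination (conj (x θ) * y θ) * hconj

lemma ae_norm_fourier_eq_one (n : ℤ) : ∀ᵐ θ ∂μ, ‖fourier n θ‖ = 1 :=
  Eventually.of_forall fun θ => by simp [fourier_apply, Circle.norm_coe]

lemma mulCLM_fourier_fourierLp (n m : ℤ) :
    mulCLM (fourier n) (memLinfty_contMap _) (fourierLp 2 m) = fourierLp 2 (n + m) := by
  refine Lp.ext ?_
  filter_upwards [mulCLM_coeFn _ (memLinfty_contMap (fourier n)) (fourierLp 2 m),
    coeFn_fourierLp 2 m, coeFn_fourierLp (T := 2 * Real.pi) 2 (n + m)] with θ h₁ h₂ h₃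
  rw [h₁, h₂, h₃, fourier_add]

lemma mulCLM_fourierLp_zero (u : T2π → ℂ) (hu : MemLp u ⊤ μ) :
    mulCLM u hu (fourierLp 2 0) =ᵐ[μ] u := by
  filter_upwards [mulCLM_coeFn u hu (fourierLp 2 0), coeFn_fourierLp (T := 2 * Real.pi) 2 0]
    with θ h₁ h₂
  rw [h₁, h₂, fourier_zero, mul_one]

lemma mulCLM_fourierLp_add (u : T2π → ℂ) (hu : MemLp u ⊤ μ) (n m : ℤ) :
    mulCLM u hu (fourierLp 2 (n + m)) =
      mulCLM (fourier n) (memLinfty_contMap _) (mulCLM u hu (fourierLp 2 m)) := by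
  rw [mulCLM_comm, mulCLM_fourier_fourierLp]

lemma inner_fourierLp (n : ℤ) (x : Ltwo) :
    inner ℂ (fourierLp 2 n : Ltwo) x = fourierCoeff x n := by
  rw [← fourierBasis_repr, HilbertBasis.repr_apply_apply, coe_fourierBasis]

lemma inner_fourierLp_fourierLp (m n : ℤ) :
    inner ℂ (fourierLp 2 m : Ltwo) (fourierLp 2 n) = if m = n then 1 else 0 :=
  orthonormal_iff_ite.mp orthonormal_fourier m n

lemma inner_fourierLp_mulCLM_fourierLp (u : T2π → ℂ) (hu : MemLp u ⊤ μ) (m k : ℤ) :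
    inner ℂ (fourierLp 2 m : Ltwo) (mulCLM u hu (fourierLp 2 k)) = fourierCoeff u (m - k) := by
  have hm : (fourierLp 2 m : Ltwo) =
      mulCLM (fourier k) (memLinfty_contMap _) (fourierLp 2 (m - k)) := by
    rw [mulCLM_fourier_fourierLp, add_sub_cancel]
  rw [hm, ← add_zero k, mulCLM_fourierLp_add, add_zero,
    inner_mulCLM_mulCLM _ (ae_norm_fourier_eq_one k), inner_fourierLp,
    fourierCoeff_congr_ae (mulCLM_fourierLp_zero u hu)]

lemma mem_H2_iff_inner (x : Ltwo) :
    x ∈ H2 ↔ ∀ n : ℤ, n < 0 → inner ℂ (fourierLp 2 n : Ltwo) x = 0 := by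
  simp only [inner_fourierLp]
  unfold H2
  rfl

lemma fourierLp_mem_H2 {n : ℤ} (hn : 0 ≤ n) : (fourierLp 2 n : Ltwo) ∈ H2 :=
  (mem_H2_iff_inner _).2 fun m hm => by
    rw [inner_fourierLp_fourierLp, if_neg (by omega)]

/-- The Fourier series of `x ∈ H²` only involves `e_n` with `n ≥ 0`. -/
lemma map_eq_zero_of_mem_H2 (L : Ltwo →L[ℂ] ℂ) (hL : ∀ n : ℤ, 0 ≤ n → L (fourierLp 2 n) = 0)
    {x : Ltwo} (hx : x ∈ H2) : L x = 0 := by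
  have hterm : ∀ n : ℤ, L (fourierCoeff x n • fourierLp 2 n) = 0 := fun n => by
    rcases lt_or_ge n 0 with hn | hn
    · rw [← inner_fourierLp, (mem_H2_iff_inner x).1 hx n hn, zero_smul, map_zero]
    · rw [map_smul, hL n hn, smul_zero]
  exact ((hasSum_fourier_series_L2 x).mapL L).unique (by simp [hterm])

lemma mem_KuSub_iff (u : T2π → ℂ) (hu : IsInner u) (x : Ltwo) :
    x ∈ KuSub u hu ↔ (∀ n : ℤ, n < 0 → inner ℂ (fourierLp 2 n : Ltwo) x = 0) ∧
      ∀ k : ℤ, 0 ≤ k → inner ℂ (mulCLM u hu.memLinfty (fourierLp 2 k)) x = 0 := by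
  unfold KuSub
  rw [Submodule.mem_inf, mem_H2_iff_inner, Submodule.mem_orthogonal]
  refine and_congr_right fun _ => ⟨fun h k hk => h _ ⟨_, fourierLp_mem_H2 hk, rfl⟩, ?_⟩
  rintro h _ ⟨y, hy, rfl⟩
  have hL : ∀ k : ℤ, 0 ≤ k → (innerSL ℂ x ∘L mulCLM u hu.memLinfty) (fourierLp 2 k) = 0 :=
    fun k hk => by rw [comp_apply, innerSL_apply_apply, ← inner_conj_symm, h k hk, map_zero]
  rw [← inner_conj_symm, map_eq_zero]
  exact map_eq_zero_of_mem_H2 _ hL hy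

def hankelCLM (u : T2π → ℂ) (hu : IsInner u) : C(T2π, ℂ) →L[ℂ] (KuSub u hu →L[ℂ] Ltwo) :=
  compL ℂ (KuSub u hu) Ltwo Ltwo (ContinuousLinearMap.id ℂ Ltwo - (KuSub u hu).starProjection) ∘L
    (compL ℂ (KuSub u hu) Ltwo Ltwo).flip (KuSub u hu).subtypeL ∘L mulContCLM

lemma hankel_mul (u : T2π → ℂ) (hu : IsInner u) {φ ψ : T2π → ℂ} (hφ : MemLp φ ⊤ μ)
    (hψ : MemLp ψ ⊤ μ) :
    hankel u hu (fun θ => φ θ * ψ θ) (memLinfty_mul hφ hψ) =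
      hankel u hu φ hφ ∘L TTOp u hu ψ hψ +
        ((ContinuousLinearMap.id ℂ Ltwo - (KuSub u hu).starProjection) ∘L mulCLM φ hφ) ∘L
          hankel u hu ψ hψ := by
  unfold hankel TTOp
  rw [mulCLM_mul hφ hψ]
  ext g : 1
  simp only [comp_apply, add_apply, sub_apply, id_apply, Submodule.subtypeL_apply,
    ← Submodule.starProjection_apply, map_sub]
  abel

def compactHankelSymbols (u : T2π → ℂ) (hu : IsInner u) : Submodule ℂ C(T2π, ℂ) :=
  (compactOperator (RingHom.id ℂ) (KuSub u hu) Ltwo).comap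
    (hankelCLM u hu : C(T2π, ℂ) →ₗ[ℂ] KuSub u hu →L[ℂ] Ltwo)

lemma mem_compactHankelSymbols_iff (u : T2π → ℂ) (hu : IsInner u) (f : C(T2π, ℂ)) :
    f ∈ compactHankelSymbols u hu ↔ IsCompactOperator (hankel u hu f (memLinfty_contMap f)) :=
  Iff.rfl

lemma isClosed_compactHankelSymbols (u : T2π → ℂ) (hu : IsInner u) :
    IsClosed (compactHankelSymbols u hu : Set C(T2π, ℂ)) :=
  isClosed_setOfPred_isCompactOperator.preimage (hankelCLM u hu).continuous

lemma mul_mem_compactHankelSymbols (u : T2π → ℂ) (hu : IsInner u) {f g : C(T2π, ℂ)}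
    (hf : f ∈ compactHankelSymbols u hu) (hg : g ∈ compactHankelSymbols u hu) :
    f * g ∈ compactHankelSymbols u hu := by
  rw [mem_compactHankelSymbols_iff] at hf hg ⊢
  change IsCompactOperator
    (hankel u hu (fun θ => f θ * g θ) (memLinfty_mul (memLinfty_contMap f) (memLinfty_contMap g)))
  rw [hankel_mul u hu (memLinfty_contMap f) (memLinfty_contMap g), FunLike.coe_add, coe_comp,
    coe_comp]
  exact (hf.comp_clm _).add (hg.clm_comp _)

lemma fourier_one_mem_compactHankelSymbols (u : T2π → ℂ) (hu : IsInner u) :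
    fourier 1 ∈ compactHankelSymbols u hu := by
  set K := KuSub u hu
  set S := mulCLM (fourier 1) (memLinfty_contMap _)
  set v := mulCLM u hu.memLinfty (fourierLp 2 0)
  have hv : v ∈ Kᗮ := (Submodule.mem_orthogonal' _ _).2 fun x hx =>
    ((mem_KuSub_iff u hu x).1 hx).2 0 le_rfl
  refine K.isCompactOperator_sub_starProjection_comp (S ∘L K.subtypeL) hv fun g => ?_
  obtain ⟨hg₁, hg₂⟩ := (mem_KuSub_iff u hu g).1 g.2
  simp only [comp_apply, Submodule.subtypeL_apply]
  refine (mem_KuSub_iff u hu _).2 ⟨fun m hm => ?_, fun k hk => ?_⟩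
  · have hm' : (fourierLp 2 m : Ltwo) = S (fourierLp 2 (m - 1)) := by
      rw [mulCLM_fourier_fourierLp, add_sub_cancel]
    rw [inner_sub_right, inner_smul_right, inner_fourierLp_mulCLM_fourierLp, sub_zero,
      hu.negCoeff m hm, mul_zero, sub_zero, hm', inner_mulCLM_mulCLM _ (ae_norm_fourier_eq_one 1)]
    exact hg₁ _ (by omega)
  · rw [inner_sub_right, inner_smul_right, inner_mulCLM_mulCLM _ hu.unimodular,
      inner_fourierLp_fourierLp]
    rcases hk.eq_or_lt with rfl | hk
    · simp [v]
    · obtain ⟨j, rfl⟩ : ∃ j, k = 1 + j := ⟨k - 1, by ring⟩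
      rw [if_neg (by omega), mul_zero, sub_zero, mulCLM_fourierLp_add,
        inner_mulCLM_mulCLM _ (ae_norm_fourier_eq_one 1)]
      exact hg₂ j (by omega)

lemma fourier_neg_one_mem_compactHankelSymbols (u : T2π → ℂ) (hu : IsInner u) :
    fourier (-1) ∈ compactHankelSymbols u hu := by
  set K := KuSub u hu
  set S := mulCLM (fourier (-1)) (memLinfty_contMap _)
  have hv : (fourierLp 2 (-1) : Ltwo) ∈ Kᗮ := (Submodule.mem_orthogonal' _ _).2 fun x hx =>
    ((mem_KuSub_iff u hu x).1 hx).1 (-1) (by norm_num)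
  refine K.isCompactOperator_sub_starProjection_comp (S ∘L K.subtypeL) hv fun g => ?_
  obtain ⟨hg₁, hg₂⟩ := (mem_KuSub_iff u hu g).1 g.2
  simp only [comp_apply, Submodule.subtypeL_apply]
  refine (mem_KuSub_iff u hu _).2 ⟨fun m hm => ?_, fun k hk => ?_⟩
  · rw [inner_sub_right, inner_smul_right, inner_fourierLp_fourierLp]
    by_cases hm₁ : m = -1
    · simp [hm₁]
    · have hm' : (fourierLp 2 m : Ltwo) = S (fourierLp 2 (m + 1)) := by
        rw [mulCLM_fourier_fourierLp]
        ring_nf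
      rw [if_neg hm₁, mul_zero, sub_zero, hm', inner_mulCLM_mulCLM _ (ae_norm_fourier_eq_one _)]
      exact hg₁ _ (by omega)
  · have hk' : mulCLM u hu.memLinfty (fourierLp 2 k) =
        S (mulCLM u hu.memLinfty (fourierLp 2 (k + 1))) := by
      rw [← mulCLM_fourierLp_add]
      ring_nf
    rw [inner_sub_right, inner_smul_right,
      ← inner_conj_symm (mulCLM u hu.memLinfty (fourierLp 2 k)) (fourierLp 2 (-1) : Ltwo),
      inner_fourierLp_mulCLM_fourierLp, hu.negCoeff _ (by omega), map_zero, mul_zero, sub_zero,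
      hk', inner_mulCLM_mulCLM _ (ae_norm_fourier_eq_one _)]
    exact hg₂ _ (by omega)

lemma fourier_mem_compactHankelSymbols (u : T2π → ℂ) (hu : IsInner u) (n : ℤ) :
    fourier n ∈ compactHankelSymbols u hu := by
  have hmul : ∀ m k : ℤ, fourier (T := 2 * Real.pi) (m + k) = fourier m * fourier k :=
    fun m k => ContinuousMap.ext fun _ => fourier_add
  have hz := fourier_one_mem_compactHankelSymbols u hu
  have hzbar := fourier_neg_one_mem_compactHankelSymbols u hu
  induction n using Int.induction_on with
  | zero => simpa [← hmul] using mul_mem_compactHankelSymbols u hu hz hzbar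
  | succ n ih => simpa [← hmul] using mul_mem_compactHankelSymbols u hu ih hz
  | pred n ih => simpa [← hmul, sub_eq_add_neg] using mul_mem_compactHankelSymbols u hu ih hzbar

/-- For a continuous symbol `f`, the Hankel-type operator
`H_f^u : K_u → L²` is compact. -/
theorem hankel_compact_of_continuous (u : T2π → ℂ) (hu : IsInner u) (f : C(T2π, ℂ)) :
    IsCompactOperator ⇑(hankel u hu ⇑f (memLinfty_contMap f)) := by
  have hspan : Submodule.span ℂ (Set.range fourier) ≤ compactHankelSymbols u hu :=
    Submodule.span_le.2 (Set.range_subset_iff.2 (fourier_mem_compactHankelSymbols u hu))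
  have hclosure := Submodule.topologicalClosure_minimal _ hspan (isClosed_compactHankelSymbols u hu)
  rw [span_fourier_closure_eq_top] at hclosure
  exact hclosure (Submodule.mem_top (x := f))

end TTOPaper
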